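/- Let μ > 0 and define δ_μ(ε) = Φ(−ε/μ + μ/2) − e^ε·Φ(−ε/μ − μ/2). Let P and Q be probability measures on a measurable space such that for every ε ≥ 0 the pair (P, Q) satisfies (ε, δ_μ(ε))-indistinguishability. Then for every measurable set E with P(E) ∈ (0,1) and every t ∈ ℝ with Φ(t) = 1 − P(E), one has 1 − Q(E) ≥ Φ(t − μ); that is, a mechanism that is (ε, δ_μ(ε))-differentially private for all ε ≥ 0 is μ-Gaussian differentially private. -/

import Mathlib

/-!
At `ε = μ |t - μ/2|` the curve `δ_μ` collapses: writing `Φ(t) = 1 - P(E)` and using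
`Φ(-x) = 1 - Φ(x)`, the bound `Q(E) ≤ e^ε P(E) + δ_μ(ε)` (when `t ≥ μ/2`), resp.
`P(Eᶜ) ≤ e^ε Q(Eᶜ) + δ_μ(ε)` (when `t < μ/2`), reduces to `1 - Q(E) ≥ Φ(t - μ)`.
-/

open MeasureTheory ProbabilityTheory Real

/-- The cumulative distribution function of the standard Gaussian `N(0,1)`. -/
noncomputable def stdGaussCDF (x : ℝ) : ℝ :=
  ProbabilityTheory.cdf (ProbabilityTheory.gaussianReal 0 1) x

/-- The `δ(ε)` curve of `μ`-Gaussian differential privacy. -/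
noncomputable def gdpDelta (μ ε : ℝ) : ℝ :=
  stdGaussCDF (-ε / μ + μ / 2) - Real.exp ε * stdGaussCDF (-ε / μ - μ / 2)

lemma cdf_neg_of_map_neg_eq {ν : Measure ℝ} [IsProbabilityMeasure ν]
    (hsymm : ν.map (fun x ↦ -x) = ν) {x : ℝ} (hx : ν {x} = 0) :
    cdf ν (-x) = 1 - cdf ν x := by
  have hIic : ν.real (Set.Iic (-x)) = ν.real (Set.Ici x) := by
    conv_lhs => rw [← hsymm]
    rw [map_measureReal_apply (by fun_prop) measurableSet_Iic]
    exact congrArg ν.real ((Set.neg_Iic (-x)).trans (by rw [neg_neg]))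
  rw [cdf_eq_real, cdf_eq_real, hIic, measureReal_congr (Ioi_ae_eq_Ici' hx).symm,
    ← Set.compl_Iic, probReal_compl_eq_one_sub measurableSet_Iic]

lemma stdGaussCDF_neg (x : ℝ) : stdGaussCDF (-x) = 1 - stdGaussCDF x :=
  cdf_neg_of_map_neg_eq (by rw [gaussianReal_map_neg, neg_zero])
    (gaussianReal_absolutelyContinuous 0 one_ne_zero Real.volume_singleton)

lemma gdpDelta_mul_sub {μ : ℝ} (hμ : μ ≠ 0) (t : ℝ) :
    gdpDelta μ (μ * (μ / 2 - t)) =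
      stdGaussCDF t - Real.exp (μ * (μ / 2 - t)) * stdGaussCDF (t - μ) := by
  have harg₁ : -(μ * (μ / 2 - t)) / μ + μ / 2 = t := by field_simp; ring
  have harg₂ : -(μ * (μ / 2 - t)) / μ - μ / 2 = t - μ := by field_simp; ring
  rw [gdpDelta, harg₁, harg₂]

theorem stmt_13 {Ω : Type*} [MeasurableSpace Ω] (μ : ℝ) (hμ : 0 < μ)
    (P Q : Measure Ω) [IsProbabilityMeasure P] [IsProbabilityMeasure Q]
    (hindist : ∀ ε : ℝ, 0 ≤ ε → ∀ O : Set Ω, MeasurableSet O →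
      (P O).toReal ≤ Real.exp ε * (Q O).toReal + gdpDelta μ ε ∧
      (Q O).toReal ≤ Real.exp ε * (P O).toReal + gdpDelta μ ε) :
    ∀ E : Set Ω, MeasurableSet E → (P E).toReal ∈ Set.Ioo (0 : ℝ) 1 →
      ∀ t : ℝ, stdGaussCDF t = 1 - (P E).toReal →
        1 - (Q E).toReal ≥ stdGaussCDF (t - μ) := by
  intro E hE _ t ht
  simp only [← measureReal_def] at hindist ht ⊢
  rcases le_or_gt (μ / 2) t with ht_large | ht_small
  · have hδ := gdpDelta_mul_sub hμ.ne' (μ - t)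
    set ε := μ * (μ / 2 - (μ - t))
    rw [sub_sub_cancel_left, stdGaussCDF_neg, ← neg_sub t μ, stdGaussCDF_neg, ht] at hδ
    have hQ := (hindist ε (mul_nonneg hμ.le (by linarith)) E hE).2
    linarith
  · have hδ := gdpDelta_mul_sub hμ.ne' t
    set ε := μ * (μ / 2 - t)
    have hP := (hindist ε (mul_nonneg hμ.le (by linarith)) Eᶜ hE.compl).1
    rw [probReal_compl_eq_one_sub hE, probReal_compl_eq_one_sub hE, hδ, ← ht] at hP
    exact le_of_mul_le_mul_left (by linarith) (Real.exp_pos ε)
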